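/- Let r₀, κ, ρ : [0,T] → ℝ be continuous, and define α(s) = μ (N₁(s)+N₂(s))^{-1} κ(s), where N₁(s) = exp(∫_s^T r₀) and N₂(s) = μ exp(∫_s^T r₀) ∫_s^T exp(-∫_τ^T r₀) κ(τ) ρ(τ) dτ. Assuming N₁(s)+N₂(s) ≠ 0 for all s, the function N₂ satisfies the ODE dN₂/ds = -r₀(s) N₂(s) - (N₁(s)+N₂(s)) α(s) ρ(s) with terminal condition N₂(T) = 0. -/

import Mathlib

/-!
Writing `R(s) = ∫_s^T r₀`, the function `N₂` is `μ` times the variation-of-constants solution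
`y(s) = e^{R(s)} ∫_s^T e^{-R(τ)} κ(τ) ρ(τ) dτ` of the backward linear equation `y' = -r₀ y - κ ρ`,
`y(T) = 0`; and `(N₁ + N₂) α ρ = μ κ ρ` wherever `N₁ + N₂ ≠ 0`.
-/

open Real intervalIntegral

theorem Continuous.hasDerivAt_integral_left {E : Type*} [NormedAddCommGroup E] [NormedSpace ℝ E]
    [CompleteSpace E] {f : ℝ → E} (hf : Continuous f) (b s : ℝ) :
    HasDerivAt (fun u => ∫ τ in u..b, f τ) (-f s) s :=
  integral_hasDerivAt_left (hf.intervalIntegrable _ _) (hf.stronglyMeasurableAtFilter _ _)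
    hf.continuousAt

theorem hasDerivAt_exp_integral_mul_integral {r g : ℝ → ℝ} (hr : Continuous r)
    (hg : Continuous g) (T s : ℝ) :
    HasDerivAt (fun u => exp (∫ τ in u..T, r τ) * ∫ τ in u..T, exp (-∫ v in τ..T, r v) * g τ)
      (-r s * (exp (∫ τ in s..T, r τ) * ∫ τ in s..T, exp (-∫ v in τ..T, r v) * g τ) - g s) s := by
  have hR : ∀ u, HasDerivAt (fun u => ∫ τ in u..T, r τ) (-r u) u := hr.hasDerivAt_integral_left T
  have hR_cont : Continuous fun u => ∫ τ in u..T, r τ :=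
    continuous_iff_continuousAt.2 fun u => (hR u).continuousAt
  have hG : HasDerivAt (fun u => ∫ τ in u..T, exp (-∫ v in τ..T, r v) * g τ)
      (-(exp (-∫ v in s..T, r v) * g s)) s :=
    (hR_cont.neg.rexp.mul hg).hasDerivAt_integral_left T s
  have hexp_cancel : exp (∫ τ in s..T, r τ) * exp (-∫ τ in s..T, r τ) = 1 := by
    rw [← exp_add, add_neg_cancel, exp_zero]
  refine ((hR s).exp.mul hG).congr_deriv ?_
  linear_combination -g s * hexp_cancel

theorem N2_satisfies_ODE_general (T : ℝ) (μ : ℝ)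
    (r₀ κ ρ : ℝ → ℝ) (hr₀ : Continuous r₀) (hκ : Continuous κ) (hρ : Continuous ρ)
    (N₁ N₂ α : ℝ → ℝ)
    (hN₂ : ∀ s, N₂ s = μ * Real.exp (∫ τ in s..T, r₀ τ) *
        ∫ τ in s..T, Real.exp (-∫ v in τ..T, r₀ v) * κ τ * ρ τ)
    (hα : ∀ s, α s = μ * (N₁ s + N₂ s)⁻¹ * κ s)
    (hne : ∀ s ∈ Set.Icc (0 : ℝ) T, N₁ s + N₂ s ≠ 0) :
    N₂ T = 0 ∧
    ∀ s ∈ Set.Icc (0 : ℝ) T,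
      HasDerivAt N₂ (-(r₀ s) * N₂ s - (N₁ s + N₂ s) * α s * ρ s) s := by
  simp only [mul_assoc] at hN₂
  refine ⟨by simp [hN₂], fun s hs => ?_⟩
  have hforcing : (N₁ s + N₂ s) * α s * ρ s = μ * (κ s * ρ s) := by
    rw [hα]
    field_simp [hne s hs]
  rw [hforcing, funext hN₂]
  have hκρ : Continuous fun τ => κ τ * ρ τ := hκ.mul hρ
  refine ((hasDerivAt_exp_integral_mul_integral hr₀ hκρ T s).const_mul μ).congr_deriv ?_
  ring

theorem N2_satisfies_ODE (T : ℝ) (hT : 0 < T) (μ : ℝ) (hμ : 0 ≤ μ)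
    (r₀ κ ρ : ℝ → ℝ) (hr₀ : Continuous r₀) (hκ : Continuous κ) (hρ : Continuous ρ)
    (N₁ N₂ α : ℝ → ℝ)
    (hN₁ : ∀ s, N₁ s = Real.exp (∫ τ in s..T, r₀ τ))
    (hN₂ : ∀ s, N₂ s = μ * Real.exp (∫ τ in s..T, r₀ τ) *
        ∫ τ in s..T, Real.exp (-∫ v in τ..T, r₀ v) * κ τ * ρ τ)
    (hα : ∀ s, α s = μ * (N₁ s + N₂ s)⁻¹ * κ s)
    (hne : ∀ s ∈ Set.Icc (0 : ℝ) T, N₁ s + N₂ s ≠ 0) :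
    N₂ T = 0 ∧
    ∀ s ∈ Set.Icc (0 : ℝ) T,
      HasDerivAt N₂ (-(r₀ s) * N₂ s - (N₁ s + N₂ s) * α s * ρ s) s :=
  N2_satisfies_ODE_general T μ r₀ κ ρ hr₀ hκ hρ N₁ N₂ α hN₂ hα hne
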